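/- Let Λ = ∂_y ∂_x acting on ℂ[[x,y]], P(x,y) = x + e^y, and g(x,y) = x. Then for every m ≥ 1, Λ^m(P^m · g) = m·m!·e^y ≠ 0. -/

import Mathlib

/-- The partial derivative `∂_i` on `ℂ[[x,y]]`, defined coefficientwise. -/
noncomputable def pd (i : Fin 2) (f : MvPowerSeries (Fin 2) ℂ) :
    MvPowerSeries (Fin 2) ℂ :=
  fun α => ((α i : ℂ) + 1) * MvPowerSeries.coeff (α + Finsupp.single i 1) f

/-- The formal power series `e^y = Σ_{n≥0} y^n / n!` in `ℂ[[x,y]]`. -/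
noncomputable def expY : MvPowerSeries (Fin 2) ℂ :=
  fun α => if α 0 = 0 then ((Nat.factorial (α 1) : ℂ))⁻¹ else 0

open MvPowerSeries Finset in
lemma coeff_pd (i : Fin 2) (f : MvPowerSeries (Fin 2) ℂ) (α : Fin 2 →₀ ℕ) :
    MvPowerSeries.coeff α (pd i f) =
      ((α i : ℂ) + 1) * MvPowerSeries.coeff (α + Finsupp.single i 1) f := rfl

lemma coeff_expY (α : Fin 2 →₀ ℕ) :
    MvPowerSeries.coeff α expY =
      if α 0 = 0 then ((Nat.factorial (α 1) : ℂ))⁻¹ else 0 := rfl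

lemma pd_add (i : Fin 2) (f g : MvPowerSeries (Fin 2) ℂ) :
    pd i (f + g) = pd i f + pd i g := by
  ext α
  simp only [coeff_pd, map_add]
  ring

lemma pd_smul (i : Fin 2) (c : ℂ) (f : MvPowerSeries (Fin 2) ℂ) :
    pd i (c • f) = c • pd i f := by
  ext α
  simp only [coeff_pd, map_smul, smul_eq_mul]
  ring

open Finset in
lemma sum_helper (i : Fin 2) (f g : (Fin 2 →₀ ℕ) → ℂ) (α : Fin 2 →₀ ℕ) :
    ∑ p ∈ antidiagonal α, (((p.1 i : ℂ) + 1) * f (p.1 + Finsupp.single i 1)) * g p.2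
    = Finset.sum (antidiagonal (α + Finsupp.single i 1))
        (fun q : (Fin 2 →₀ ℕ) × (Fin 2 →₀ ℕ) => ((q.1 i : ℂ) * f q.1) * g q.2) := by
  classical
  have hinj : Function.Injective
      (fun p : (Fin 2 →₀ ℕ) × (Fin 2 →₀ ℕ) => (p.1 + Finsupp.single i 1, p.2)) := by
    intro p q h
    simp only [Prod.mk.injEq] at h
    exact Prod.ext (by exact add_right_cancel h.1) h.2
  rw [show (∑ p ∈ antidiagonal α,
      (((p.1 i : ℂ) + 1) * f (p.1 + Finsupp.single i 1)) * g p.2)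
      = ∑ q ∈ (antidiagonal α).map ⟨_, hinj⟩, ((q.1 i : ℂ) * f q.1) * g q.2 by
    rw [Finset.sum_map]
    refine Finset.sum_congr rfl fun p _ => ?_
    simp [Finsupp.add_apply, Finsupp.single_apply]]
  refine Finset.sum_subset ?_ ?_
  · intro q hq
    simp only [Finset.mem_map, Function.Embedding.coeFn_mk, Finset.HasAntidiagonal.mem_antidiagonal] at hq ⊢
    obtain ⟨p, hp, rfl⟩ := hq
    rw [add_right_comm, hp]
  · intro q hq hq'
    have h0 : q.1 i = 0 := by
      by_contra h0
      apply hq'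
      simp only [Finset.mem_map, Function.Embedding.coeFn_mk, Finset.HasAntidiagonal.mem_antidiagonal] at hq ⊢
      have hle : Finsupp.single i 1 ≤ q.1 := by
        rw [Finsupp.single_le_iff]
        omega
      refine ⟨(q.1 - Finsupp.single i 1, q.2), ?_, ?_⟩
      · have := tsub_add_cancel_of_le hle
        have h2 : q.1 - Finsupp.single i 1 + q.2 + Finsupp.single i 1
            = α + Finsupp.single i 1 := by
          rw [add_right_comm, this, hq]
        exact add_right_cancel h2
      · simp [tsub_add_cancel_of_le hle]
    simp [h0]

open Finset in
lemma pd_mul (i : Fin 2) (f g : MvPowerSeries (Fin 2) ℂ) :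
    pd i (f * g) = pd i f * g + f * pd i g := by
  ext α
  rw [map_add, coeff_pd, MvPowerSeries.coeff_mul, MvPowerSeries.coeff_mul,
    MvPowerSeries.coeff_mul, Finset.mul_sum]
  have h1 : ∑ p ∈ antidiagonal α, MvPowerSeries.coeff p.1 (pd i f) * MvPowerSeries.coeff p.2 g
      = Finset.sum (antidiagonal (α + Finsupp.single i 1))
          (fun q : (Fin 2 →₀ ℕ) × (Fin 2 →₀ ℕ) =>
            ((q.1 i : ℂ) * MvPowerSeries.coeff q.1 f) * MvPowerSeries.coeff q.2 g) := by
    rw [← sum_helper i (fun β => MvPowerSeries.coeff β f) (fun β => MvPowerSeries.coeff β g) α]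
    exact Finset.sum_congr rfl fun p _ => by rw [coeff_pd]
  have h2 : ∑ p ∈ antidiagonal α, MvPowerSeries.coeff p.1 f * MvPowerSeries.coeff p.2 (pd i g)
      = Finset.sum (antidiagonal (α + Finsupp.single i 1))
          (fun q : (Fin 2 →₀ ℕ) × (Fin 2 →₀ ℕ) =>
            ((q.2 i : ℂ) * MvPowerSeries.coeff q.2 g) * MvPowerSeries.coeff q.1 f) := by
    rw [← Finset.HasAntidiagonal.map_swap_antidiagonal (n := α + Finsupp.single i 1), Finset.sum_map,
      ← Finset.HasAntidiagonal.map_swap_antidiagonal (n := α), Finset.sum_map]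
    simp only [Function.Embedding.coeFn_mk, Prod.swap]
    rw [← sum_helper i (fun β => MvPowerSeries.coeff β g) (fun β => MvPowerSeries.coeff β f) α]
    refine Finset.sum_congr rfl fun p _ => ?_
    rw [coeff_pd]
    ring
  rw [h1, h2, ← Finset.sum_add_distrib]
  refine Finset.sum_congr rfl fun q hq => ?_
  rw [Finset.HasAntidiagonal.mem_antidiagonal] at hq
  have : (q.1 i : ℂ) + (q.2 i : ℂ) = (α i : ℂ) + 1 := by
    have : q.1 i + q.2 i = α i + 1 := by
      have := congrArg (fun β : Fin 2 →₀ ℕ => β i) hq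
      simpa [Finsupp.add_apply, Finsupp.single_apply] using this
    exact_mod_cast this
  linear_combination (-(MvPowerSeries.coeff q.1 f * MvPowerSeries.coeff q.2 g)) * this

lemma add_single_ne_zero (i : Fin 2) (α : Fin 2 →₀ ℕ) : α + Finsupp.single i 1 ≠ 0 := by
  intro h
  have := DFunLike.congr_fun h i
  simp [Finsupp.add_apply] at this

lemma pd_C (i : Fin 2) (c : ℂ) : pd i ((MvPowerSeries.C (σ := Fin 2) (R := ℂ)) c) = 0 := by
  ext α
  rw [coeff_pd, MvPowerSeries.coeff_C, if_neg (add_single_ne_zero i α)]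
  simp

lemma pd_natCast (i : Fin 2) (n : ℕ) : pd i ((n : ℕ) : MvPowerSeries (Fin 2) ℂ) = 0 := by
  rw [← map_natCast ((MvPowerSeries.C (σ := Fin 2) (R := ℂ))) n]
  exact pd_C i _

lemma pd_one (i : Fin 2) : pd i 1 = 0 := by
  simpa using pd_natCast i 1

lemma pd_cast_mul (i : Fin 2) (n : ℕ) (f : MvPowerSeries (Fin 2) ℂ) :
    pd i (((n : ℕ) : MvPowerSeries (Fin 2) ℂ) * f) = ((n : ℕ) : MvPowerSeries (Fin 2) ℂ) * pd i f := by
  rw [pd_mul, pd_natCast]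
  ring

lemma pd0_expY : pd 0 expY = 0 := by
  ext α
  rw [coeff_pd, coeff_expY]
  have : ((α + Finsupp.single 0 1 : Fin 2 →₀ ℕ)) 0 = α 0 + 1 := by
    simp [Finsupp.add_apply]
  rw [this]
  simp

lemma pd1_expY : pd 1 expY = expY := by
  ext α
  rw [coeff_pd, coeff_expY, coeff_expY]
  have h0 : ((α + Finsupp.single 1 1 : Fin 2 →₀ ℕ)) 0 = α 0 := by
    simp [Finsupp.add_apply, Finsupp.single_apply]
  have h1 : ((α + Finsupp.single 1 1 : Fin 2 →₀ ℕ)) 1 = α 1 + 1 := by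
    simp [Finsupp.add_apply]
  rw [h0, h1]
  by_cases h : α 0 = 0
  · simp only [h, if_true]
    rw [Nat.factorial_succ]
    have hne : ((α 1 : ℂ) + 1) ≠ 0 := Nat.cast_add_one_ne_zero (α 1)
    have hfac : ((α 1).factorial : ℂ) ≠ 0 := Nat.cast_ne_zero.mpr (α 1).factorial_ne_zero
    push_cast
    field_simp
  · simp [h]

lemma pd_X (i j : Fin 2) : pd i (MvPowerSeries.X j) =
    if i = j then 1 else 0 := by
  ext α
  rw [coeff_pd, MvPowerSeries.coeff_X]
  by_cases hij : i = j
  · subst hij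
    simp only [if_true]
    by_cases hα : α = 0
    · subst hα
      simp [MvPowerSeries.coeff_one]
    · have : α + Finsupp.single i 1 ≠ Finsupp.single i 1 := by
        intro h
        exact hα (by simpa using add_right_cancel (h.trans (zero_add (Finsupp.single i 1)).symm))
      rw [if_neg this]
      simp [MvPowerSeries.coeff_one, hα]
  · have : α + Finsupp.single i 1 ≠ Finsupp.single j 1 := by
      intro h
      have := DFunLike.congr_fun h i
      simp [Finsupp.add_apply, Finsupp.single_apply, hij, Ne.symm hij] at this
    rw [if_neg this]
    simp [hij]

lemma pd0_X0 : pd 0 (MvPowerSeries.X 0) = 1 := by simp [pd_X]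

lemma pd1_X0 : pd 1 (MvPowerSeries.X 0) = 0 := by
  rw [pd_X]
  norm_num

lemma pd_pow (i : Fin 2) (f : MvPowerSeries (Fin 2) ℂ) (n : ℕ) :
    pd i (f ^ (n + 1)) = ((n + 1 : ℕ) : MvPowerSeries (Fin 2) ℂ) * f ^ n * pd i f := by
  induction n with
  | zero => simp [pow_one]
  | succ n ih =>
    rw [pow_succ, pd_mul, ih]
    push_cast
    ring

lemma pd0_P : pd 0 (MvPowerSeries.X 0 + expY) = 1 := by
  rw [pd_add, pd0_X0, pd0_expY, add_zero]

lemma key (m : ℕ) : ∀ j, j ≤ m →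
    (pd 0)^[j] ((MvPowerSeries.X 0 + expY) ^ m * MvPowerSeries.X 0)
      = ((m.descFactorial j : ℕ) : MvPowerSeries (Fin 2) ℂ)
          * ((MvPowerSeries.X 0 + expY) ^ (m - j) * MvPowerSeries.X 0)
        + (((j * m.descFactorial (j - 1)) : ℕ) : MvPowerSeries (Fin 2) ℂ)
          * (MvPowerSeries.X 0 + expY) ^ (m - j + 1) := by
  intro j
  induction j with
  | zero => intro _; simp
  | succ j ih =>
    intro hj
    have hjm : j ≤ m := by omega
    obtain ⟨k, hk⟩ : ∃ k, m - j = k + 1 := ⟨m - (j + 1), by omega⟩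
    have hk2 : m - (j + 1) = k := by omega
    have hk3 : m - j + 1 = k + 1 + 1 := by omega
    rw [Function.iterate_succ_apply', ih hjm, pd_add, pd_cast_mul, pd_cast_mul, pd_mul, hk,
      pd_pow, pd_pow, pd0_P, pd0_X0, hk2]
    simp only [Nat.add_sub_cancel]
    have h1 : m.descFactorial (j + 1) = (k + 1) * m.descFactorial j := by
      rw [Nat.descFactorial_succ, hk]
    have h2 : (j + 1) * m.descFactorial j
        = m.descFactorial j + j * m.descFactorial (j - 1) * (k + 1 + 1) := by
      match j with
      | 0 => simp
      | (i + 1) =>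
        have hd : m.descFactorial (i + 1) = (k + 1 + 1) * m.descFactorial i := by
          rw [Nat.descFactorial_succ, show m - i = k + 1 + 1 by omega]
        simp only [Nat.add_sub_cancel, hd]
        ring
    rw [h1, h2]
    push_cast
    ring

lemma cast_mul_eq_smul (n : ℕ) (f : MvPowerSeries (Fin 2) ℂ) :
    ((n : ℕ) : MvPowerSeries (Fin 2) ℂ) * f = ((n : ℕ) : ℂ) • f := by
  ext α
  rw [← map_natCast ((MvPowerSeries.C (σ := Fin 2) (R := ℂ))) n, MvPowerSeries.coeff_C_mul,
    MvPowerSeries.coeff_smul]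

lemma iter_pd1_cast_mul_expY (k b : ℕ) :
    (pd 1)^[k] (((b : ℕ) : MvPowerSeries (Fin 2) ℂ) * expY)
      = ((b : ℕ) : MvPowerSeries (Fin 2) ℂ) * expY := by
  induction k with
  | zero => rfl
  | succ k ih => rw [Function.iterate_succ_apply, pd_cast_mul, pd1_expY, ih]

lemma coeff_zero_expY : MvPowerSeries.coeff 0 expY = 1 := by
  rw [coeff_expY]
  simp

/-- For `Λ = ∂_y ∂_x`, `P = x + e^y` and `g = x`, one has
`Λ^m(P^m g) = m·m!·e^y ≠ 0` for every `m ≥ 1`. -/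
theorem counterexample_gvc_power_series (m : ℕ) (hm : 1 ≤ m) :
    (pd 1)^[m] ((pd 0)^[m] ((MvPowerSeries.X 0 + expY) ^ m * MvPowerSeries.X 0)) =
      ((m : ℂ) * (Nat.factorial m : ℂ)) • expY ∧
    ((m : ℂ) * (Nat.factorial m : ℂ)) • expY ≠ 0 := by
  constructor
  · have h := key m m le_rfl
    rw [Nat.sub_self, pow_zero, one_mul, zero_add, pow_one] at h
    have hd2 : m.descFactorial (m - 1) = m.factorial := by
      have h3 : m.descFactorial m = m.descFactorial (m - 1 + 1) := by congr 1; omega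
      rw [Nat.descFactorial_self, Nat.descFactorial_succ] at h3
      have : m - (m - 1) = 1 := by omega
      rw [this, one_mul] at h3
      exact h3.symm
    rw [Nat.descFactorial_self, hd2] at h
    have hstep : (pd 0)^[m] ((MvPowerSeries.X 0 + expY) ^ m * MvPowerSeries.X 0)
        = (((m.factorial + m * m.factorial : ℕ)) : MvPowerSeries (Fin 2) ℂ) * MvPowerSeries.X 0
          + (((m * m.factorial : ℕ)) : MvPowerSeries (Fin 2) ℂ) * expY := by
      rw [h]
      push_cast
      ring
    rw [hstep]
    obtain ⟨n, rfl⟩ : ∃ n, m = n + 1 := ⟨m - 1, by omega⟩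
    rw [Function.iterate_succ_apply, pd_add, pd_cast_mul, pd_cast_mul, pd1_X0, pd1_expY,
      mul_zero, zero_add, iter_pd1_cast_mul_expY, cast_mul_eq_smul]
    push_cast
    ring_nf
  · intro h
    have hc : ((m : ℂ) * (Nat.factorial m : ℂ)) = 0 := by
      have := congrArg (MvPowerSeries.coeff 0) h
      rwa [MvPowerSeries.coeff_smul, coeff_zero_expY, mul_one, map_zero] at this
    have hm0 : (m : ℂ) ≠ 0 := Nat.cast_ne_zero.mpr (by omega)
    have hf0 : ((Nat.factorial m : ℕ) : ℂ) ≠ 0 := Nat.cast_ne_zero.mpr m.factorial_ne_zero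
    exact (mul_ne_zero hm0 hf0) hc
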